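/- arXiv:2605.00006 — 2 statements merged into one kernel-verified Lean document; each statement's English description precedes it below -/
import Mathlib

section
/- Define σ(φ₀, Δθ) = arccos(sin²φ₀ + cos²φ₀ · cos Δθ). For all φ₀ ∈ [0, π/2] and Δθ ∈ [-π, π], 2 cos φ₀ · |sin(Δθ/2)| ≤ σ(φ₀, Δθ) ≤ |Δθ|. -/
/-!
With `t = cos φ₀ · sin(Δθ/2)` the argument of the arccosine is `1 - 2t²`. Since
`1 - x²/2 ≤ cos x`, we get `1 - 2t² ≤ cos (2t)`, so `2t ≤ arccos (1 - 2t²)` as long as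
`2t ≤ π`. For the upper bound, the argument is a convex combination of `1` and `cos Δθ`, hence at
least `cos Δθ`, and `arccos (cos Δθ) ≤ |Δθ|`.
-/

open Real

lemma arccos_cos_le_abs (x : ℝ) : arccos (cos x) ≤ |x| := by
  by_cases hx : |x| ≤ π
  · rw [← cos_abs, arccos_cos (abs_nonneg x) hx]
  · exact (arccos_le_pi _).trans (not_le.mp hx).le

lemma two_mul_le_arccos_one_sub_two_mul_sq {t : ℝ} (ht : t ≤ π / 2) :
    2 * t ≤ arccos (1 - 2 * t ^ 2) := by
  rcases le_or_gt t 0 with ht0 | ht0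
  · linarith [arccos_nonneg (1 - 2 * t ^ 2)]
  calc 2 * t = arccos (cos (2 * t)) := (arccos_cos (by linarith) (by linarith)).symm
    _ ≤ arccos (1 - 2 * t ^ 2) := by
      apply arccos_le_arccos
      linarith [one_sub_sq_div_two_le_cos (x := 2 * t)]

lemma sin_sq_add_cos_sq_mul_cos (a b : ℝ) :
    sin a ^ 2 + cos a ^ 2 * cos b = 1 - 2 * (cos a * sin (b / 2)) ^ 2 := by
  have hb : cos b = 1 - 2 * sin (b / 2) ^ 2 := by
    rw [← cos_two_mul_eq_one_sub, mul_div_cancel₀ b two_ne_zero]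
  rw [hb]
  linear_combination sin_sq_add_cos_sq a

lemma cos_le_sin_sq_add_cos_sq_mul_cos (a b : ℝ) : cos b ≤ sin a ^ 2 + cos a ^ 2 * cos b := by
  have hconvex : sin a ^ 2 + cos a ^ 2 * cos b = cos b + sin a ^ 2 * (1 - cos b) := by
    linear_combination cos b * sin_sq_add_cos_sq a
  rw [hconvex]
  linarith [mul_nonneg (sq_nonneg (sin a)) (sub_nonneg.mpr (cos_le_one b))]

theorem sigma_two_sided_bounds_general (φ₀ Δθ : ℝ) :
    2 * cos φ₀ * |sin (Δθ / 2)| ≤ arccos (sin φ₀ ^ 2 + cos φ₀ ^ 2 * cos Δθ) ∧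
    arccos (sin φ₀ ^ 2 + cos φ₀ ^ 2 * cos Δθ) ≤ |Δθ| := by
  constructor
  · have ht : cos φ₀ * |sin (Δθ / 2)| ≤ π / 2 :=
      calc cos φ₀ * |sin (Δθ / 2)| ≤ |cos φ₀| * |sin (Δθ / 2)| := by
            gcongr; exact le_abs_self _
        _ ≤ 1 := mul_le_one₀ (abs_cos_le_one _) (abs_nonneg _) (abs_sin_le_one _)
        _ ≤ π / 2 := one_le_pi_div_two
    calc 2 * cos φ₀ * |sin (Δθ / 2)| = 2 * (cos φ₀ * |sin (Δθ / 2)|) := mul_assoc _ _ _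
      _ ≤ arccos (1 - 2 * (cos φ₀ * |sin (Δθ / 2)|) ^ 2) :=
        two_mul_le_arccos_one_sub_two_mul_sq ht
      _ = arccos (sin φ₀ ^ 2 + cos φ₀ ^ 2 * cos Δθ) := by
        rw [mul_pow, sq_abs, ← mul_pow, sin_sq_add_cos_sq_mul_cos]
  · exact (arccos_le_arccos (cos_le_sin_sq_add_cos_sq_mul_cos φ₀ Δθ)).trans
      (arccos_cos_le_abs Δθ)

open Real in
theorem sigma_two_sided_bounds (φ₀ Δθ : ℝ)
    (hφ : φ₀ ∈ Set.Icc 0 (π / 2)) (hθ : Δθ ∈ Set.Icc (-π) π) :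
    2 * cos φ₀ * |sin (Δθ / 2)| ≤ arccos (sin φ₀ ^ 2 + cos φ₀ ^ 2 * cos Δθ) ∧
    arccos (sin φ₀ ^ 2 + cos φ₀ ^ 2 * cos Δθ) ≤ |Δθ| :=
  sigma_two_sided_bounds_general φ₀ Δθ
end

section
/- Let φ₀ ∈ [0, π/2], s ≥ 2 an integer, Δ > 0, and define S(s, φ₀) = Σ_{j=0}^{s-1} σ(φ₀, (j − (s−1)/2)Δ)², where σ(φ₀, t) = arccos(sin²φ₀ + cos²φ₀ cos t). Assume (s/2)Δ ≤ π. Then (4/π²) cos²φ₀ · (Δ²/12)(s² − 1) ≤ (1/s) S(s, φ₀) ≤ (Δ²/12)(s² − 1). -/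
/-!
With `x = cos φ₀ · sin (t / 2)` the spherical law of cosines reads `σ(φ₀, t) = arccos (1 - 2 x²)`,
and `2 |x| ≤ arccos (1 - 2 x²) ≤ |t|`. Jordan's inequality `|sin (t / 2)| ≥ |t| / π` turns the
left bound into `σ(φ₀, t) ≥ (2 / π) |cos φ₀| |t|` as long as `|t| ≤ π`, which `(s / 2) Δ ≤ π`
guarantees for every offset `t = (j - (s - 1) / 2) Δ` of the block. Squaring and summing, both
bounds reduce to `∑ⱼ (j - (s - 1) / 2)² = s (s² - 1) / 12`.
-/

open Real Finset

/-- The paper's `σ(φ, t)`: the geodesic distance on the unit sphere between two points of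
latitude `φ` whose longitudes differ by `t`. -/
noncomputable def latitudeDist (φ t : ℝ) : ℝ :=
  arccos (sin φ ^ 2 + cos φ ^ 2 * cos t)

lemma sin_sq_add_cos_sq_mul_cos_eq (φ t : ℝ) :
    sin φ ^ 2 + cos φ ^ 2 * cos t = 1 - 2 * (cos φ * sin (t / 2)) ^ 2 := by
  have h := cos_two_mul_eq_one_sub (t / 2)
  rw [mul_div_cancel₀ t two_ne_zero] at h
  linear_combination sin_sq_add_cos_sq φ + cos φ ^ 2 * h

lemma two_mul_abs_le_arccos_one_sub_two_mul_sq {x : ℝ} (hx : |x| ≤ π / 2) :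
    2 * |x| ≤ arccos (1 - 2 * x ^ 2) := by
  have hcos : 1 - 2 * x ^ 2 ≤ cos (2 * |x|) := by
    rw [cos_two_mul_eq_one_sub]
    nlinarith [sin_sq_le_sq (x := |x|), sq_abs x]
  calc 2 * |x| = arccos (cos (2 * |x|)) := (arccos_cos (by positivity) (by linarith)).symm
    _ ≤ arccos (1 - 2 * x ^ 2) := arccos_le_arccos hcos

lemma latitudeDist_le_abs (φ t : ℝ) : latitudeDist φ t ≤ |t| := by
  rcases le_or_gt |t| π with ht | ht
  · have hcos : cos |t| ≤ sin φ ^ 2 + cos φ ^ 2 * cos t := by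
      rw [cos_abs]
      nlinarith [sin_sq_add_cos_sq φ, cos_le_one t, sq_nonneg (sin φ)]
    calc latitudeDist φ t ≤ arccos (cos |t|) := arccos_le_arccos hcos
      _ = |t| := arccos_cos (abs_nonneg t) ht
  · exact (arccos_le_pi _).trans ht.le

lemma mul_abs_cos_mul_abs_le_latitudeDist (φ : ℝ) {t : ℝ} (ht : |t| ≤ π) :
    2 / π * |cos φ| * |t| ≤ latitudeDist φ t := by
  have habs_half : |t / 2| = |t| / 2 := by rw [abs_div, abs_two]
  have hjordan := mul_abs_le_abs_sin (x := t / 2) (by rw [habs_half]; linarith)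
  have hx : |cos φ * sin (t / 2)| ≤ π / 2 := by
    rw [abs_mul]
    nlinarith [abs_cos_le_one φ, abs_sin_le_one (t / 2), abs_nonneg (cos φ),
      abs_nonneg (sin (t / 2)), pi_gt_three]
  calc 2 / π * |cos φ| * |t| = 2 * (|cos φ| * (2 / π * |t / 2|)) := by rw [habs_half]; ring
    _ ≤ 2 * |cos φ * sin (t / 2)| := by rw [abs_mul]; gcongr
    _ ≤ latitudeDist φ t := by
      rw [latitudeDist, sin_sq_add_cos_sq_mul_cos_eq]
      exact two_mul_abs_le_arccos_one_sub_two_mul_sq hx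

lemma sum_range_sub_sq (n : ℕ) (c : ℝ) :
    ∑ j ∈ range n, ((j : ℝ) - c) ^ 2 = n * ((n - 1) * (2 * n - 1) / 6 - c * (n - 1) + c ^ 2) := by
  induction n with
  | zero => simp
  | succ n ih => rw [sum_range_succ, ih]; push_cast; ring

lemma sum_range_sub_mid_sq (n : ℕ) :
    ∑ j ∈ range n, ((j : ℝ) - (n - 1) / 2) ^ 2 = (n : ℝ) * (n ^ 2 - 1) / 12 := by
  rw [sum_range_sub_sq]; ring

lemma abs_sub_mid_le {n j : ℕ} (hj : j < n) : |(j : ℝ) - (n - 1) / 2| ≤ (n - 1) / 2 := by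
  have hjn : (j : ℝ) + 1 ≤ n := by exact_mod_cast hj
  exact abs_le.mpr ⟨by linarith [(j.cast_nonneg : (0 : ℝ) ≤ j)], by linarith⟩

open Real in
theorem block_distortion_bounds_general (φ₀ Δ : ℝ) (s : ℕ)
    (hs : 2 ≤ s) (hΔ : 0 < Δ)
    (hspan : (s : ℝ) / 2 * Δ ≤ π)
    (S : ℝ)
    (hS : S = ∑ j ∈ Finset.range s,
        (arccos (sin φ₀ ^ 2 + cos φ₀ ^ 2 * cos (((j : ℝ) - ((s : ℝ) - 1) / 2) * Δ))) ^ 2) :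
    (4 / π ^ 2) * cos φ₀ ^ 2 * (Δ ^ 2 / 12) * ((s : ℝ) ^ 2 - 1) ≤ (1 / (s : ℝ)) * S ∧
    (1 / (s : ℝ)) * S ≤ (Δ ^ 2 / 12) * ((s : ℝ) ^ 2 - 1) := by
  set t : ℕ → ℝ := fun j ↦ ((j : ℝ) - ((s : ℝ) - 1) / 2) * Δ
  have hs0 : (0 : ℝ) < s := by positivity
  have ht : ∀ j ∈ range s, |t j| ≤ π := fun j hj ↦ by
    rw [abs_mul, abs_of_pos hΔ]
    nlinarith [abs_sub_mid_le (mem_range.mp hj)]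
  have hsum : ∑ j ∈ range s, t j ^ 2 = s * (s ^ 2 - 1) / 12 * Δ ^ 2 := by
    simp only [t, mul_pow]
    rw [← sum_mul, sum_range_sub_mid_sq]
  have hlow : (2 / π * |cos φ₀|) ^ 2 * ∑ j ∈ range s, t j ^ 2 ≤ S := by
    rw [hS, mul_sum]
    refine sum_le_sum fun j hj ↦ ?_
    rw [← mul_pow, sq_le_sq, abs_of_nonneg (arccos_nonneg _), abs_mul, abs_of_nonneg (by positivity)]
    exact mul_abs_cos_mul_abs_le_latitudeDist φ₀ (ht j hj)
  have hhigh : S ≤ ∑ j ∈ range s, t j ^ 2 := by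
    rw [hS]
    refine sum_le_sum fun j _ ↦ ?_
    rw [sq_le_sq, abs_of_nonneg (arccos_nonneg _)]
    exact latitudeDist_le_abs φ₀ (t j)
  rw [hsum, mul_pow, sq_abs, div_pow] at hlow
  rw [hsum] at hhigh
  rw [one_div, le_inv_mul_iff₀ hs0, inv_mul_le_iff₀ hs0]
  constructor <;> linarith

open Real in
theorem block_distortion_bounds (φ₀ Δ : ℝ) (s : ℕ)
    (hφ : φ₀ ∈ Set.Icc 0 (π / 2)) (hs : 2 ≤ s) (hΔ : 0 < Δ)
    (hspan : (s : ℝ) / 2 * Δ ≤ π)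
    (S : ℝ)
    (hS : S = ∑ j ∈ Finset.range s,
        (arccos (sin φ₀ ^ 2 + cos φ₀ ^ 2 * cos (((j : ℝ) - ((s : ℝ) - 1) / 2) * Δ))) ^ 2) :
    (4 / π ^ 2) * cos φ₀ ^ 2 * (Δ ^ 2 / 12) * ((s : ℝ) ^ 2 - 1) ≤ (1 / (s : ℝ)) * S ∧
    (1 / (s : ℝ)) * S ≤ (Δ ^ 2 / 12) * ((s : ℝ) ^ 2 - 1) :=
  block_distortion_bounds_general φ₀ Δ s hs hΔ hspan S hS
end
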